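/- arXiv:2506.12337 — 7 statements merged into one kernel-verified Lean document; each statement's English description precedes it below -/
import Mathlib

section
/- Under the hypotheses of the previous setting (n ≥ 3, p strictly increasing with denominators positive), the function W(ρ) = Σ_{i=2}^{n-1} p_n/(p_n - (1-ρ)p_i - ρ p_{i-1}) + (1-ρ) p_n/(p_n - p_1) + ρ p_n/(p_n - p_{n-1}) + 1 satisfies W(0) = W(1), and hence there exists ρ* ∈ (0,1) with W(ρ*) < W(0). -/
/-- `W 0 = W 1`, and hence there is an interior randomization probability `ρ* ∈ (0,1)`
that strictly outperforms both pure replacement strategies. -/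
theorem stmt_1 (n : ℕ) (hn : 3 ≤ n) (p : ℕ → ℝ)
    (hp0 : 0 ≤ p 0)
    (hmono : ∀ k < n, p k < p (k + 1))
    (hconv : ∀ k, k ≤ n - 2 → p (k + 1) - p k < p (k + 2) - p (k + 1))
    (hden : ∀ ρ ∈ Set.Icc (0 : ℝ) 1, ∀ i, 2 ≤ i → i ≤ n - 1 →
      0 < p n - (1 - ρ) * p i - ρ * p (i - 1))
    (hden1 : 0 < p n - p 1) (hdenn : 0 < p n - p (n - 1))
    (W : ℝ → ℝ)
    (hW : ∀ ρ : ℝ, W ρ =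
      (∑ i ∈ Finset.Icc 2 (n - 1), p n / (p n - (1 - ρ) * p i - ρ * p (i - 1)))
      + (1 - ρ) * p n / (p n - p 1) + ρ * p n / (p n - p (n - 1)) + 1) :
    W 0 = W 1 ∧ ∃ ρ ∈ Set.Ioo (0 : ℝ) 1, W ρ < W 0 := by
  obtain ⟨k, rfl⟩ : ∃ k, n = k + 3 := ⟨n - 3, by omega⟩
  have hn1 : k + 3 - 1 = k + 2 := rfl
  rw [hn1] at hdenn
  have hpn : 0 < p (k + 3) := by
    have h0 := hmono 0 (by omega)
    linarith
  set f : ℕ → ℝ := fun i => p (k + 3) / (p (k + 3) - p i) with hf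
  -- basic denominator facts
  have key : ∀ i, 2 ≤ i → i ≤ k + 2 →
      0 < p (k+3) - p i ∧ 0 < p (k+3) - p (i-1) ∧ p (i-1) < p i := by
    intro i h2 hk
    have ha := hden 0 (by norm_num) i h2 (by omega)
    have hb := hden 1 (by norm_num) i h2 (by omega)
    norm_num at ha hb
    have hm := hmono (i-1) (by omega)
    have hi1 : i - 1 + 1 = i := by omega
    rw [hi1] at hm
    exact ⟨by linarith, by linarith, hm⟩
  -- reindexing
  have reindex : ∀ g : ℕ → ℝ,
      ∑ i ∈ Finset.Icc 2 (k+2), g (i-1) = ∑ i ∈ Finset.Icc 1 (k+1), g i := by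
    intro g
    rw [show Finset.Icc 2 (k+2) = Finset.map (addRightEmbedding 1) (Finset.Icc 1 (k+1)) by
      rw [Finset.map_add_right_Icc], Finset.sum_map]
    simp [addRightEmbedding]
  have hsum_eq : (∑ i ∈ Finset.Icc 2 (k+2), f i) + f 1
      = (∑ i ∈ Finset.Icc 2 (k+2), f (i-1)) + f (k+2) := by
    rw [reindex f]
    have h1 : Finset.Icc 1 (k+2) = insert 1 (Finset.Icc 2 (k+2)) := by
      ext x; simp; omega
    have h2 : (∑ i ∈ Finset.Icc 1 (k+2), f i)
        = (∑ i ∈ Finset.Icc 1 (k+1), f i) + f (k+2) := by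
      rw [Finset.sum_Icc_succ_top (by omega)]
    rw [← h2, h1, Finset.sum_insert (by simp)]
    ring
  -- values of W
  have hW0 : W 0 = (∑ i ∈ Finset.Icc 2 (k+2), f i) + f 1 + 1 := by
    rw [hW 0, hn1]
    have : ∀ i ∈ Finset.Icc 2 (k+2),
        p (k+3) / (p (k+3) - (1-(0:ℝ)) * p i - 0 * p (i-1)) = f i := by
      intro i _; simp [hf]
    rw [Finset.sum_congr rfl this]
    simp [hf]
  have hW1 : W 1 = (∑ i ∈ Finset.Icc 2 (k+2), f (i-1)) + f (k+2) + 1 := by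
    rw [hW 1, hn1]
    have : ∀ i ∈ Finset.Icc 2 (k+2),
        p (k+3) / (p (k+3) - (1-(1:ℝ)) * p i - 1 * p (i-1)) = f (i-1) := by
      intro i _; simp [hf]
    rw [Finset.sum_congr rfl this]
    simp [hf]
  have hWeq : W 0 = W 1 := by rw [hW0, hW1, hsum_eq]
  refine ⟨hWeq, ⟨1/2, by norm_num, ?_⟩⟩
  -- strict convexity at 1/2
  have hWh : W (1/2) = (∑ i ∈ Finset.Icc 2 (k+2),
      p (k+3) / (p (k+3) - (1-(1/2:ℝ)) * p i - (1/2) * p (i-1)))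
      + (1/2) * p (k+3) / (p (k+3) - p 1) + (1/2) * p (k+3) / (p (k+3) - p (k+2)) + 1 := by
    rw [hW (1/2), hn1]; norm_num
  have hterm : ∀ i ∈ Finset.Icc 2 (k+2),
      2 * (p (k+3) / (p (k+3) - (1-(1/2:ℝ)) * p i - (1/2) * p (i-1)))
        < f i + f (i-1) := by
    intro i hi
    simp only [Finset.mem_Icc] at hi
    obtain ⟨ha, hb, hab⟩ := key i hi.1 hi.2
    have hd := hden (1/2) (by norm_num) i hi.1 (by omega)
    simp only [hf]
    rw [div_add_div _ _ (ne_of_gt ha) (ne_of_gt hb), mul_div_assoc',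
      div_lt_div_iff₀ hd (by positivity)]
    have hsq : 0 < ((p (k+3) - p (i-1)) - (p (k+3) - p i))^2 :=
      pow_pos (by linarith) 2
    nlinarith [mul_pos hpn hsq]
  have hlt := Finset.sum_lt_sum_of_nonempty
    (s := Finset.Icc 2 (k+2)) (by simp) hterm
  rw [← Finset.mul_sum, Finset.sum_add_distrib] at hlt
  rw [hWh, hW0]
  have h01 : W 0 = W 1 := hWeq
  rw [hW1] at h01
  rw [hW0] at h01
  have e1 : (1/2) * p (k+3) / (p (k+3) - p 1) = (1/2) * f 1 := by
    simp only [hf]; ring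
  have e2 : (1/2) * p (k+3) / (p (k+3) - p (k+2)) = (1/2) * f (k+2) := by
    simp only [hf]; ring
  linarith
end

section
/- Let 0 ≤ p_{n-2} < p_{n-1} < p_n, and let x_{n-1} ∈ (0,1), x_n ≥ 0 be real numbers with x_{n-1}+x_n ≤ 1. Let R_{n-1} > 0 and R'_{n-1} = R_{n-1} + x_{n-1}(p_n - p_{n-1}). Then (1-x_{n-1})²/R_{n-1} - 1/R'_{n-1} + x_{n-1}/(p_n - p_{n-1}) ≥ 0. -/
/-- Key inequality showing that shifting replacement probability from worker `n-1` to
worker `n` weakly reduces the principal's cost: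
`(1-x)²/R - 1/R' + x/(pₙ - pₙ₋₁) ≥ 0` where `R' = R + x(pₙ - pₙ₋₁)`. -/
theorem stmt_5 (pnm2 pnm1 pn xnm1 xn R : ℝ)
    (h0 : 0 ≤ pnm2) (h1 : pnm2 < pnm1) (h2 : pnm1 < pn)
    (hx0 : 0 < xnm1) (hx1 : xnm1 < 1) (hxn : 0 ≤ xn) (hsum : xnm1 + xn ≤ 1)
    (hR : 0 < R) :
    0 ≤ (1 - xnm1) ^ 2 / R - 1 / (R + xnm1 * (pn - pnm1)) + xnm1 / (pn - pnm1) := by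
  have hd : 0 < pn - pnm1 := by linarith
  have hR' : 0 < R + xnm1 * (pn - pnm1) := by positivity
  have key : (1 - xnm1) ^ 2 / R - 1 / (R + xnm1 * (pn - pnm1)) + xnm1 / (pn - pnm1)
      = (xnm1 * (R - (1 - xnm1) * (pn - pnm1)) ^ 2)
        / (R * (R + xnm1 * (pn - pnm1)) * (pn - pnm1)) := by
    field_simp
    ring
  rw [key]
  positivity
end

section
/- Let 0 ≤ p_0 < p_1 < p_2 < p_3 and let x_1, x_3 ∈ (0,1] with x_1 > x_3 and x_1 + x_3 ≤ 1. Then (1-x_1)²/((1-x_1)(p_3-p_0) - x_3(p_1-p_0)) + 1/((p_3-p_1) - x_3(p_2-p_1)) + (1-x_3)/(p_3-p_2) > (1-x_3)²/((1-x_3)(p_3-p_0) - x_1(p_1-p_0)) + 1/((p_3-p_1) - x_1(p_2-p_1)) + (1-x_1)/(p_3-p_2), provided all denominators are strictly positive. -/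
/-!
Write `x = x₁`, `y = x₃`, and `D₁, D₂` (resp. `E₁, E₂`) for the front (resp. middle) denominators
on the two sides. The front terms differ by at most `(x - y)/(p₃ - p₁)`, because
`(1-x)²/D₁ - (1-y)²/D₂ + (x-y)/(p₃-p₁) = (x-y)(p₁-p₀)²(1-x-y)² / ((p₃-p₁) D₁ D₂)`.
The middle terms differ by `(x-y)(p₂-p₁)/(E₁E₂)`, and `x + y ≤ 1` gives `E₁E₂ > (p₃-p₂)(p₃-p₁)`,
so this is strictly less than `(x-y)/(p₃-p₂) - (x-y)/(p₃-p₁)`. The end terms differ by exactly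
`(x-y)/(p₃-p₂)`, which therefore outweighs the other two differences.
-/

section ThreeWorkerChain

variable {p0 p1 p2 p3 x y : ℝ}

theorem front_cost_swap_le (h13 : p1 < p3) (hyx : y ≤ x)
    (hD₁ : 0 < (1 - x) * (p3 - p0) - y * (p1 - p0))
    (hD₂ : 0 < (1 - y) * (p3 - p0) - x * (p1 - p0)) :
    (1 - y) ^ 2 / ((1 - y) * (p3 - p0) - x * (p1 - p0))
      ≤ (1 - x) ^ 2 / ((1 - x) * (p3 - p0) - y * (p1 - p0)) + (x - y) / (p3 - p1) := by
  have hq : 0 < p3 - p1 := sub_pos.mpr h13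
  have key : (1 - x) ^ 2 / ((1 - x) * (p3 - p0) - y * (p1 - p0)) + (x - y) / (p3 - p1)
      - (1 - y) ^ 2 / ((1 - y) * (p3 - p0) - x * (p1 - p0))
      = (x - y) * (p1 - p0) ^ 2 * (1 - x - y) ^ 2
        / ((p3 - p1) * ((1 - x) * (p3 - p0) - y * (p1 - p0))
            * ((1 - y) * (p3 - p0) - x * (p1 - p0))) := by
    rw [div_add_div _ _ hD₁.ne' hq.ne', div_sub_div _ _ (by positivity) hD₂.ne',
      div_eq_div_iff (by positivity) (by positivity)]
    ring
  have : 0 ≤ x - y := sub_nonneg.mpr hyx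
  have : 0 ≤ (x - y) * (p1 - p0) ^ 2 * (1 - x - y) ^ 2
      / ((p3 - p1) * ((1 - x) * (p3 - p0) - y * (p1 - p0))
          * ((1 - y) * (p3 - p0) - x * (p1 - p0))) := by positivity
  linarith

theorem middle_cost_swap_lt (h12 : p1 < p2) (h23 : p2 < p3) (hy : 0 < y) (hyx : y < x)
    (hxy : x + y ≤ 1) :
    1 / ((p3 - p1) - x * (p2 - p1)) - 1 / ((p3 - p1) - y * (p2 - p1))
      < (x - y) / (p3 - p2) - (x - y) / (p3 - p1) := by
  have hb : 0 < p2 - p1 := sub_pos.mpr h12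
  have hc : 0 < p3 - p2 := sub_pos.mpr h23
  have hq : 0 < p3 - p1 := by linarith
  have hE₁ : 0 < (p3 - p1) - y * (p2 - p1) := by nlinarith
  have hE₂ : 0 < (p3 - p1) - x * (p2 - p1) := by nlinarith
  have hprod : (p3 - p2) * (p3 - p1)
      < ((p3 - p1) - y * (p2 - p1)) * ((p3 - p1) - x * (p2 - p1)) := by
    have : ((p3 - p1) - y * (p2 - p1)) * ((p3 - p1) - x * (p2 - p1)) - (p3 - p2) * (p3 - p1)
        = (p2 - p1) * (p3 - p1) * (1 - x - y) + x * y * (p2 - p1) ^ 2 := by ring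
    have : 0 ≤ (p2 - p1) * (p3 - p1) * (1 - x - y) := by
      have : 0 ≤ 1 - x - y := by linarith
      positivity
    have : 0 < x * y * (p2 - p1) ^ 2 := by
      have : 0 < x := hy.trans hyx
      positivity
    linarith
  have hnum : 0 < (x - y) * (p2 - p1) := mul_pos (sub_pos.mpr hyx) hb
  calc 1 / ((p3 - p1) - x * (p2 - p1)) - 1 / ((p3 - p1) - y * (p2 - p1))
      = (x - y) * (p2 - p1) / (((p3 - p1) - y * (p2 - p1)) * ((p3 - p1) - x * (p2 - p1))) := by
        rw [div_sub_div _ _ hE₂.ne' hE₁.ne', div_eq_div_iff (by positivity) (by positivity)]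
        ring
    _ < (x - y) * (p2 - p1) / ((p3 - p2) * (p3 - p1)) :=
        div_lt_div_of_pos_left hnum (by positivity) hprod
    _ = (x - y) / (p3 - p2) - (x - y) / (p3 - p1) := by
        rw [div_sub_div _ _ hc.ne' hq.ne']
        ring

end ThreeWorkerChain

theorem stmt_7_general (p0 p1 p2 p3 x1 x3 : ℝ)
    (h12 : p1 < p2) (h23 : p2 < p3)
    (hx3 : 0 < x3)
    (hgt : x3 < x1) (hsum : x1 + x3 ≤ 1)
    (hd1 : 0 < (1 - x1) * (p3 - p0) - x3 * (p1 - p0))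
    (hd2 : 0 < (1 - x3) * (p3 - p0) - x1 * (p1 - p0)) :
    (1 - x3) ^ 2 / ((1 - x3) * (p3 - p0) - x1 * (p1 - p0))
      + 1 / ((p3 - p1) - x1 * (p2 - p1)) + (1 - x1) / (p3 - p2)
    < (1 - x1) ^ 2 / ((1 - x1) * (p3 - p0) - x3 * (p1 - p0))
      + 1 / ((p3 - p1) - x3 * (p2 - p1)) + (1 - x3) / (p3 - p2) := by
  have front := front_cost_swap_le (h12.trans h23) hgt.le hd1 hd2
  have middle := middle_cost_swap_lt h12 h23 hx3 hgt hsum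
  have back : (1 - x3) / (p3 - p2) - (1 - x1) / (p3 - p2) = (x1 - x3) / (p3 - p2) := by ring
  linarith

/-- Swapping replacement probabilities so the end-most worker is replaced more often than
the front-most worker strictly lowers the principal's compensation cost. -/
theorem stmt_7 (p0 p1 p2 p3 x1 x3 : ℝ)
    (hp0 : 0 ≤ p0) (h01 : p0 < p1) (h12 : p1 < p2) (h23 : p2 < p3)
    (hx1 : 0 < x1) (hx1' : x1 ≤ 1) (hx3 : 0 < x3) (hx3' : x3 ≤ 1)
    (hgt : x3 < x1) (hsum : x1 + x3 ≤ 1)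
    (hd1 : 0 < (1 - x1) * (p3 - p0) - x3 * (p1 - p0))
    (hd2 : 0 < (1 - x3) * (p3 - p0) - x1 * (p1 - p0))
    (hd3 : 0 < (p3 - p1) - x3 * (p2 - p1))
    (hd4 : 0 < (p3 - p1) - x1 * (p2 - p1)) :
    (1 - x3) ^ 2 / ((1 - x3) * (p3 - p0) - x1 * (p1 - p0))
      + 1 / ((p3 - p1) - x1 * (p2 - p1)) + (1 - x1) / (p3 - p2)
    < (1 - x1) ^ 2 / ((1 - x1) * (p3 - p0) - x3 * (p1 - p0))
      + 1 / ((p3 - p1) - x3 * (p2 - p1)) + (1 - x3) / (p3 - p2) :=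
  stmt_7_general p0 p1 p2 p3 x1 x3 h12 h23 hx3 hgt hsum hd1 hd2
end

section
/- Let c > 0 and α ∈ (0,1), and set p_k = α^{3-k} for k ∈ {0,1,2,3}. Define ρ = (√(1+α) - 1)/α. Then ρ ∈ (0,1), and ρ is the unique solution in (0,1) of p_3 - (1-ρ)p_2 - ρ p_1 = √((p_3-p_2)(p_3-p_1)); equivalently, the first-order condition (p_2-p_1)/(p_3 - (1-ρ)p_2 - ρ p_1)² = 1/(p_3-p_2) - 1/(p_3-p_1) holds. -/
/-!
Write `a = p₃ - p₂ = 1 - α` and `b = p₃ - p₁ = 1 - α²`. The left-hand side of the equation is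
the affine function `a + ρ (b - a)` of `ρ`, whose slope `b - a` is nonzero, so the equation has
the single solution `ρ = √a / (√a + √b)`, which lies in `(0,1)`. Since `√b = √a √(1+α)`, this
is `1 / (1 + √(1+α)) = (√(1+α) - 1) / α`. The first-order condition is the identity
`(b - a) / (a b) = 1/a - 1/b`, because the equation says that the square of the denominator
is `a b`.
-/

open Real

lemma div_add_mem_Ioo {x y : ℝ} (hx : 0 < x) (hy : 0 < y) : x / (x + y) ∈ Set.Ioo 0 1 :=
  ⟨by positivity, (div_lt_one (by positivity)).mpr (by linarith)⟩

lemma add_mul_sub_eq_sqrt_mul_iff {a b ρ : ℝ} (ha : 0 < a) (hab : a < b) :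
    a + ρ * (b - a) = √(a * b) ↔ ρ = √a / (√a + √b) := by
  obtain ⟨x, hx, rfl⟩ : ∃ x, 0 < x ∧ x ^ 2 = a := ⟨√a, sqrt_pos.mpr ha, sq_sqrt ha.le⟩
  have hb : 0 < b := ha.trans hab
  obtain ⟨y, hy, rfl⟩ : ∃ y, 0 < y ∧ y ^ 2 = b := ⟨√b, sqrt_pos.mpr hb, sq_sqrt hb.le⟩
  have hxy : x < y := lt_of_pow_lt_pow_left₀ 2 hy.le hab
  rw [sqrt_sq hx.le, sqrt_sq hy.le, ← mul_pow, sqrt_sq (by positivity), eq_div_iff (by positivity)]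
  -- `x² + ρ (y² - x²) - x y = (y - x) (ρ (x + y) - x)`, and `y - x ≠ 0`
  constructor
  · intro h
    exact mul_left_cancel₀ (sub_ne_zero.mpr hxy.ne') (by linear_combination h)
  · intro h
    linear_combination (y - x) * h

lemma sub_div_sq_eq_one_div_sub_one_div {a b d : ℝ} (ha : a ≠ 0) (hb : b ≠ 0)
    (hd : d ^ 2 = a * b) : (b - a) / d ^ 2 = 1 / a - 1 / b := by
  rw [hd]
  field_simp

lemma sqrt_one_add_sub_one_div {α : ℝ} (hα : 0 < α) :
    (√(1 + α) - 1) / α = 1 / (1 + √(1 + α)) := by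
  have hs : √(1 + α) ^ 2 = 1 + α := sq_sqrt (by linarith)
  rw [div_eq_div_iff hα.ne' (by positivity)]
  linear_combination hs

theorem stmt_11_general (α : ℝ) (hα0 : 0 < α) (hα1 : α < 1)
    (p : ℕ → ℝ) (hp : ∀ k, k ≤ 3 → p k = α ^ (3 - k))
    (ρ : ℝ) (hρ : ρ = (Real.sqrt (1 + α) - 1) / α) :
    ρ ∈ Set.Ioo (0 : ℝ) 1
    ∧ p 3 - (1 - ρ) * p 2 - ρ * p 1 = Real.sqrt ((p 3 - p 2) * (p 3 - p 1))
    ∧ (∀ ρ' ∈ Set.Ioo (0 : ℝ) 1,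
        p 3 - (1 - ρ') * p 2 - ρ' * p 1 = Real.sqrt ((p 3 - p 2) * (p 3 - p 1)) → ρ' = ρ)
    ∧ (p 2 - p 1) / (p 3 - (1 - ρ) * p 2 - ρ * p 1) ^ 2
        = 1 / (p 3 - p 2) - 1 / (p 3 - p 1) := by
  have h3 : p 3 = 1 := by simpa using hp 3 le_rfl
  have h2 : p 2 = α := by simpa using hp 2 (by norm_num)
  have h1 : p 1 = α ^ 2 := by simpa using hp 1 (by norm_num)
  have ha : 0 < 1 - α := by linarith
  have hab : 1 - α < 1 - α ^ 2 := by nlinarith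
  have hlhs : ∀ ρ', p 3 - (1 - ρ') * p 2 - ρ' * p 1 = (1 - α) + ρ' * ((1 - α ^ 2) - (1 - α)) := by
    intro ρ'
    rw [h3, h2, h1]
    ring
  have hρ_sqrt : ρ = √(1 - α) / (√(1 - α) + √(1 - α ^ 2)) := by
    have hb : √(1 - α ^ 2) = √(1 - α) * √(1 + α) := by
      rw [← sqrt_mul ha.le]
      ring_nf
    rw [hρ, sqrt_one_add_sub_one_div hα0, hb, ← mul_one_add, div_mul_cancel_left₀ (by positivity),
      one_div]
  have hsolves := (add_mul_sub_eq_sqrt_mul_iff ha hab).mpr hρ_sqrt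
  rw [show p 3 - p 2 = 1 - α by rw [h3, h2], show p 3 - p 1 = 1 - α ^ 2 by rw [h3, h1]]
  refine ⟨hρ_sqrt ▸ div_add_mem_Ioo (sqrt_pos.mpr ha) (sqrt_pos.mpr (ha.trans hab)),
    hlhs ρ ▸ hsolves, fun ρ' _ h => ?_, ?_⟩
  · exact ((add_mul_sub_eq_sqrt_mul_iff ha hab).mp (hlhs ρ' ▸ h)).trans hρ_sqrt.symm
  · rw [hlhs, hsolves, show p 2 - p 1 = (1 - α ^ 2) - (1 - α) by rw [h2, h1]; ring]
    exact sub_div_sq_eq_one_div_sub_one_div ha.ne' (by linarith)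
      (sq_sqrt (mul_pos ha (by linarith)).le)

/-- O-ring production `p_k = α^{3-k}`: `ρ = (√(1+α)-1)/α` lies in `(0,1)`, is the unique
solution in `(0,1)` of `p₃ - (1-ρ)p₂ - ρp₁ = √((p₃-p₂)(p₃-p₁))`, and satisfies the
first-order condition. -/
theorem stmt_11 (c α : ℝ) (hc : 0 < c) (hα0 : 0 < α) (hα1 : α < 1)
    (p : ℕ → ℝ) (hp : ∀ k, k ≤ 3 → p k = α ^ (3 - k))
    (ρ : ℝ) (hρ : ρ = (Real.sqrt (1 + α) - 1) / α) :
    ρ ∈ Set.Ioo (0 : ℝ) 1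
    ∧ p 3 - (1 - ρ) * p 2 - ρ * p 1 = Real.sqrt ((p 3 - p 2) * (p 3 - p 1))
    ∧ (∀ ρ' ∈ Set.Ioo (0 : ℝ) 1,
        p 3 - (1 - ρ') * p 2 - ρ' * p 1 = Real.sqrt ((p 3 - p 2) * (p 3 - p 1)) → ρ' = ρ)
    ∧ (p 2 - p 1) / (p 3 - (1 - ρ) * p 2 - ρ * p 1) ^ 2
        = 1 / (p 3 - p 2) - 1 / (p 3 - p 1) :=
  stmt_11_general α hα0 hα1 p hp ρ hρ
end

section
/- Let β ∈ (1, √2). Then [1/(β(2-β²)) - 1] - (β-1)/(2-β²) = (β+1)(β-1)²/(β(2-β²)) > 0, and (β-1)/(2-β²) - (β²-1)²/(β(β+1)(2-β²)) = (β²-1)(-β² + β + 1)/(β(β+1)(2-β²)) > 0. -/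
/-- Payoff ranking under the O-ring production (`β = √(1+α) ∈ (1,√2)`): the middle
worker's payoff exceeds the end-most worker's, which exceeds the front-most worker's. -/
theorem stmt_14 (β : ℝ) (hβ1 : 1 < β) (hβ2 : β < Real.sqrt 2) :
    ((1 / (β * (2 - β ^ 2)) - 1) - (β - 1) / (2 - β ^ 2)
        = (β + 1) * (β - 1) ^ 2 / (β * (2 - β ^ 2)))
    ∧ 0 < (β + 1) * (β - 1) ^ 2 / (β * (2 - β ^ 2))
    ∧ ((β - 1) / (2 - β ^ 2) - (β ^ 2 - 1) ^ 2 / (β * (β + 1) * (2 - β ^ 2))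
        = (β ^ 2 - 1) * (-β ^ 2 + β + 1) / (β * (β + 1) * (2 - β ^ 2)))
    ∧ 0 < (β ^ 2 - 1) * (-β ^ 2 + β + 1) / (β * (β + 1) * (2 - β ^ 2)) := by
  have hβ0 : 0 < β := by linarith
  have hsq : β ^ 2 < 2 := by
    have := Real.sq_sqrt (by norm_num : (2:ℝ) ≥ 0)
    nlinarith [Real.sqrt_nonneg 2]
  have h2 : 0 < 2 - β ^ 2 := by linarith
  have hne : (2 - β ^ 2) ≠ 0 := ne_of_gt h2
  have hβne : β ≠ 0 := ne_of_gt hβ0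
  have hβ1ne : β + 1 ≠ 0 := by positivity
  refine ⟨by field_simp; ring, ?_, by field_simp; ring, ?_⟩
  · apply div_pos (by nlinarith) (by positivity)
  · exact div_pos (mul_pos (by nlinarith) (by nlinarith)) (by positivity)
end

section
/- Let β ∈ (1, √2). Then (β²-1)³/((2-β²)[(β²-1)² + β²]) - (β²-1)²/(β(β+1)(2-β²)) has the same sign as β³ - β - 1. Consequently, the front-most worker's payoff declines after optimal AI adoption if and only if β > β̄, where β̄ ≈ 1.3247 is the unique real root of β³ - β - 1 = 0. -/
lemma cube_mono (x y : ℝ) (hx : 1 ≤ x) (hxy : x < y) : x ^ 3 - x < y ^ 3 - y := by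
  have h2 : (0:ℝ) < y ^ 2 + x * y + x ^ 2 - 1 := by nlinarith
  nlinarith [mul_pos (sub_pos.2 hxy) h2]

lemma root_gt_one (b : ℝ) (hb : b ^ 3 - b - 1 = 0) : 1 < b := by
  by_contra h
  push_neg at h
  nlinarith [sq_nonneg (b + 1), sq_nonneg b, sq_nonneg (b - 1), sq_nonneg (2*b + 1),
    sq_nonneg (3*b + 1)]

/-- The front-most worker's payoff change after optimal AI adoption has the sign of
`β³ - β - 1`; the payoff declines iff `β` exceeds the unique real root `β̄ ≈ 1.3247`
of `β³ - β - 1 = 0`. -/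
theorem stmt_15 (β : ℝ) (hβ1 : 1 < β) (hβ2 : β < Real.sqrt 2)
    (D : ℝ)
    (hD : D = (β ^ 2 - 1) ^ 3 / ((2 - β ^ 2) * ((β ^ 2 - 1) ^ 2 + β ^ 2))
            - (β ^ 2 - 1) ^ 2 / (β * (β + 1) * (2 - β ^ 2))) :
    (0 < D ↔ 0 < β ^ 3 - β - 1)
    ∧ (D < 0 ↔ β ^ 3 - β - 1 < 0)
    ∧ (∃! b : ℝ, b ^ 3 - b - 1 = 0)
    ∧ (∀ b : ℝ, b ^ 3 - b - 1 = 0 → (0 < D ↔ b < β)) := by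
  have hβ0 : (0:ℝ) < β := by linarith
  have hsq : β ^ 2 < 2 := by
    have := (Real.lt_sqrt hβ0.le).mp hβ2
    linarith
  have h1 : (0:ℝ) < 2 - β ^ 2 := by linarith
  have h2 : (0:ℝ) < (β ^ 2 - 1) ^ 2 + β ^ 2 := by positivity
  have h3 : (0:ℝ) < β * (β + 1) := by nlinarith
  have hβ21 : (0:ℝ) < β ^ 2 - 1 := by nlinarith
  have hc : (0:ℝ) < (β ^ 2 - 1) ^ 2 / ((2 - β ^ 2) * ((β ^ 2 - 1) ^ 2 + β ^ 2) * (β * (β + 1))) :=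
    div_pos (pow_pos hβ21 2) (by positivity)
  have key : D = ((β ^ 2 - 1) ^ 2 / ((2 - β ^ 2) * ((β ^ 2 - 1) ^ 2 + β ^ 2) * (β * (β + 1)))) *
      (β ^ 3 - β - 1) := by
    rw [hD]
    field_simp
    ring
  have main : 0 < D ↔ 0 < β ^ 3 - β - 1 := by
    rw [key]
    exact mul_pos_iff_of_pos_left hc
  refine ⟨main, ?_, ?_, ?_⟩
  · rw [key]
    constructor
    · intro h
      by_contra hn
      push_neg at hn
      nlinarith
    · intro h
      nlinarith
  · have hcont : ContinuousOn (fun x : ℝ => x ^ 3 - x - 1) (Set.Icc 1 2) :=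
      (by continuity : Continuous fun x : ℝ => x ^ 3 - x - 1).continuousOn
    have h0 : (0:ℝ) ∈ Set.Icc ((1:ℝ) ^ 3 - 1 - 1) ((2:ℝ) ^ 3 - 2 - 1) := by norm_num
    obtain ⟨b, _, hb⟩ := intermediate_value_Icc (by norm_num : (1:ℝ) ≤ 2) hcont h0
    refine ⟨b, hb, ?_⟩
    intro y hy
    have h1 := root_gt_one b hb
    have h2 := root_gt_one y hy
    rcases lt_trichotomy y b with h | h | h
    · have := cube_mono y b h2.le h; simp only at hb; nlinarith
    · exact h
    · have := cube_mono b y h1.le h; simp only at hb; nlinarith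
  · intro b hb
    have hb1 := root_gt_one b hb
    rw [main]
    constructor
    · intro h
      by_contra hn
      push_neg at hn
      rcases eq_or_lt_of_le hn with h' | h'
      · rw [← h'] at hb; linarith
      · have := cube_mono β b hβ1.le h'; nlinarith
    · intro h
      have := cube_mono b β hb1.le h; nlinarith
end

section
/- Let β ∈ (1, √2). Then [1/(β(2-β²)) - 1 - (β²-1)²/(β(β+1)(2-β²))] - [1/(2-β²) - 1/((2-β²)[(β²-1)²+β²])] = (β-1)/((2-β²)[(β²-1)²+β²]) · {(β-1)[(β-1)(β²+β-1) - 3] - 1} < 0. -/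
/-- Intra-team payoff inequality strictly decreases following optimal AI adoption
(O-ring production, `β = √(1+α) ∈ (1,√2)`). -/
theorem stmt_16 (β : ℝ) (hβ1 : 1 < β) (hβ2 : β < Real.sqrt 2) :
    ((1 / (β * (2 - β ^ 2)) - 1 - (β ^ 2 - 1) ^ 2 / (β * (β + 1) * (2 - β ^ 2)))
      - (1 / (2 - β ^ 2) - 1 / ((2 - β ^ 2) * ((β ^ 2 - 1) ^ 2 + β ^ 2)))
      = (β - 1) / ((2 - β ^ 2) * ((β ^ 2 - 1) ^ 2 + β ^ 2))
        * ((β - 1) * ((β - 1) * (β ^ 2 + β - 1) - 3) - 1))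
    ∧ (1 / (β * (2 - β ^ 2)) - 1 - (β ^ 2 - 1) ^ 2 / (β * (β + 1) * (2 - β ^ 2)))
      - (1 / (2 - β ^ 2) - 1 / ((2 - β ^ 2) * ((β ^ 2 - 1) ^ 2 + β ^ 2))) < 0 := by
  have hb : (0:ℝ) < β := lt_trans one_pos hβ1
  have hsq : β ^ 2 < 2 := by
    have := Real.sq_sqrt (by norm_num : (2:ℝ) ≥ 0)
    nlinarith [Real.sqrt_nonneg 2]
  have h2 : 0 < 2 - β ^ 2 := by linarith
  have hq : 0 < (β ^ 2 - 1) ^ 2 + β ^ 2 := by positivity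
  have h1 : 0 < β + 1 := by linarith
  have heq : ((1 / (β * (2 - β ^ 2)) - 1 - (β ^ 2 - 1) ^ 2 / (β * (β + 1) * (2 - β ^ 2)))
      - (1 / (2 - β ^ 2) - 1 / ((2 - β ^ 2) * ((β ^ 2 - 1) ^ 2 + β ^ 2)))
      = (β - 1) / ((2 - β ^ 2) * ((β ^ 2 - 1) ^ 2 + β ^ 2))
        * ((β - 1) * ((β - 1) * (β ^ 2 + β - 1) - 3) - 1)) := by
    field_simp
    ring
  refine ⟨heq, ?_⟩
  rw [heq]
  apply mul_neg_of_pos_of_neg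
  · exact div_pos (by linarith) (mul_pos h2 hq)
  · nlinarith [sq_nonneg (β - 1), sq_nonneg (β ^ 2 - 1)]
end
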